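/- The Thomson ring of n identical vortices of strength Γ placed at the same colatitude θ₀ on a sphere of radius R at the vertices of a regular n-gon rotates rigidly: the configuration θᵢ(t) = θ₀, φᵢ(t) = 2πi/n + ωt with ω = Γ(n−1)cotθ₀/(4πR² sinθ₀) solves the spherical vortex equations. -/

import Mathlib

/-!
On the ring every vortex sees the same configuration. Differentiating the Hamiltonian in the
azimuth of vortex `i` gives a multiple of `∑_{k ≠ i} cot((φᵢ - φ_k)/2)`, and the reflection
`k ↦ 2i - k` of the regular `n`-gon changes the sign of every term, so the sum vanishes and the
colatitudes stay fixed. Differentiating in the colatitude of vortex `i`, every pair term at equal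
colatitudes contributes `cot θ₀`, whatever the azimuths; the `n - 1` equal contributions give
every vortex the same angular velocity `ω`.
-/

open Real Finset

/-- Hamiltonian of `n` identical vortices of strength `Γ` on a sphere of
radius `R`, in spherical coordinates, with
`4R² sin²(γ/2) = 4R² (1 - cos γ)/2`. -/
noncomputable def sphereHam (n : ℕ) (R Γ : ℝ) (θ φ : Fin n → ℝ) : ℝ :=
  -(1 / (4 * π)) * ∑ p ∈ Finset.univ.filter (fun p : Fin n × Fin n => p.1 < p.2),
    Γ * Γ * Real.log (4 * R ^ 2 *
      ((1 - (Real.cos (θ p.1) * Real.cos (θ p.2) +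
        Real.sin (θ p.1) * Real.sin (θ p.2) * Real.cos (φ p.1 - φ p.2))) / 2))

theorem sum_filter_lt_ite_eq_sum_erase {α M : Type*} [Fintype α] [LinearOrder α]
    [AddCommMonoid M] (i : α) (g : α → M) :
    ∑ p ∈ univ.filter (fun p : α × α => p.1 < p.2),
      (if p.1 = i then g p.2 else if p.2 = i then g p.1 else 0)
    = ∑ k ∈ univ.erase i, g k := by
  have hsplit : ∀ a b : α,
      (if a < b then (if a = i then g b else if b = i then g a else 0) else 0)
      = (if a = i then (if i < b then g b else 0) else 0)
        + (if b = i then (if a < i then g a else 0) else 0) := by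
    intro a b
    split_ifs <;> simp_all
  rw [sum_filter, Fintype.sum_prod_type]
  simp only [hsplit, sum_add_distrib, sum_ite_irrel, sum_const_zero, sum_ite_eq', if_true,
    mem_univ]
  rw [← sum_add_distrib, ← sum_erase univ (a := i) (by simp)]
  refine sum_congr rfl fun k hk => ?_
  rcases (ne_of_mem_erase hk).lt_or_gt with h | h <;> simp [h, h.not_gt]

theorem hasDerivAt_sum_filter_lt_update {α : Type*} [Fintype α] [LinearOrder α]
    (G : α → α → ℝ → ℝ → ℝ) (hG : ∀ a b u v, G a b u v = G b a v u)
    (x : α → ℝ) (i : α) (g' : α → ℝ)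
    (hg' : ∀ k ≠ i, HasDerivAt (fun u => G i k u (x k)) (g' k) (x i)) :
    HasDerivAt
      (fun u => ∑ p ∈ univ.filter (fun p : α × α => p.1 < p.2),
        G p.1 p.2 (Function.update x i u p.1) (Function.update x i u p.2))
      (∑ k ∈ univ.erase i, g' k) (x i) := by
  rw [← sum_filter_lt_ite_eq_sum_erase]
  refine HasDerivAt.fun_sum fun p hp => ?_
  obtain ⟨a, b⟩ := p
  have hab : a ≠ b := (mem_filter.mp hp).2.ne
  dsimp only
  split_ifs with ha hb
  · subst ha
    simp only [Function.update_self, Function.update_of_ne hab.symm]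
    exact hg' b hab.symm
  · subst hb
    simp only [Function.update_self, Function.update_of_ne hab, hG a]
    exact hg' a hab
  · simp only [Function.update_of_ne ha, Function.update_of_ne hb]
    exact hasDerivAt_const _ _

noncomputable def cosCentralAngle (θ₁ φ₁ θ₂ φ₂ : ℝ) : ℝ :=
  cos θ₁ * cos θ₂ + sin θ₁ * sin θ₂ * cos (φ₁ - φ₂)

noncomputable def logChordSq (R θ₁ φ₁ θ₂ φ₂ : ℝ) : ℝ :=
  log (4 * R ^ 2 * ((1 - cosCentralAngle θ₁ φ₁ θ₂ φ₂) / 2))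

theorem cosCentralAngle_comm (θ₁ φ₁ θ₂ φ₂ : ℝ) :
    cosCentralAngle θ₁ φ₁ θ₂ φ₂ = cosCentralAngle θ₂ φ₂ θ₁ φ₁ := by
  rw [cosCentralAngle, cosCentralAngle, ← neg_sub, cos_neg]
  ring

theorem logChordSq_comm (R θ₁ φ₁ θ₂ φ₂ : ℝ) :
    logChordSq R θ₁ φ₁ θ₂ φ₂ = logChordSq R θ₂ φ₂ θ₁ φ₁ := by
  rw [logChordSq, logChordSq, cosCentralAngle_comm]

theorem one_sub_cosCentralAngle_same_colatitude (θ φ₁ φ₂ : ℝ) :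
    1 - cosCentralAngle θ φ₁ θ φ₂ = sin θ ^ 2 * (1 - cos (φ₁ - φ₂)) := by
  rw [cosCentralAngle]
  linear_combination -sin_sq_add_cos_sq θ

theorem sphereHam_eq (n : ℕ) (R Γ : ℝ) (θ φ : Fin n → ℝ) :
    sphereHam n R Γ θ φ = -(Γ * Γ / (4 * π)) *
      ∑ p ∈ univ.filter (fun p : Fin n × Fin n => p.1 < p.2),
        logChordSq R (θ p.1) (φ p.1) (θ p.2) (φ p.2) := by
  simp only [sphereHam, logChordSq, cosCentralAngle, mul_sum]
  exact sum_congr rfl fun p _ => by ring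

theorem hasDerivAt_log_chordSq {c : ℝ → ℝ} {c' x : ℝ} (R : ℝ) (hc : HasDerivAt c c' x)
    (hR : R ≠ 0) (hx : 1 - c x ≠ 0) :
    HasDerivAt (fun u => log (4 * R ^ 2 * ((1 - c u) / 2))) (-c' / (1 - c x)) x := by
  convert (((hc.const_sub 1).div_const 2).const_mul (4 * R ^ 2)).log (by positivity) using 1
  field_simp

theorem hasDerivAt_logChordSq_azimuth {R θ d x : ℝ} (hR : R ≠ 0) (hθ : sin θ ≠ 0)
    (hx : cos (x - d) ≠ 1) :
    HasDerivAt (fun u => logChordSq R θ u θ d) (sin (x - d) / (1 - cos (x - d))) x := by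
  have hc : HasDerivAt (fun u => cosCentralAngle θ u θ d)
      (-(sin θ * sin θ * sin (x - d))) x := by
    unfold cosCentralAngle
    simpa using (((hasDerivAt_id x).sub_const d).cos.const_mul (sin θ * sin θ)).const_add
      (cos θ * cos θ)
  have hx' : 1 - cos (x - d) ≠ 0 := sub_ne_zero.mpr hx.symm
  have hne : 1 - cosCentralAngle θ x θ d ≠ 0 := by
    rw [one_sub_cosCentralAngle_same_colatitude]; positivity
  refine (hasDerivAt_log_chordSq R hc hR hne).congr_deriv ?_
  rw [one_sub_cosCentralAngle_same_colatitude]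
  field_simp

theorem hasDerivAt_logChordSq_colatitude {R θ φ₁ φ₂ : ℝ} (hR : R ≠ 0) (hθ : sin θ ≠ 0)
    (hφ : cos (φ₁ - φ₂) ≠ 1) :
    HasDerivAt (fun u => logChordSq R u φ₁ θ φ₂) (cos θ / sin θ) θ := by
  have hc : HasDerivAt (fun u => cosCentralAngle u φ₁ θ φ₂)
      (-sin θ * cos θ + cos θ * sin θ * cos (φ₁ - φ₂)) θ := by
    unfold cosCentralAngle
    exact ((hasDerivAt_cos θ).mul_const _).add (((hasDerivAt_sin θ).mul_const _).mul_const _)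
  have hφ' : 1 - cos (φ₁ - φ₂) ≠ 0 := sub_ne_zero.mpr hφ.symm
  have hne : 1 - cosCentralAngle θ φ₁ θ φ₂ ≠ 0 := by
    rw [one_sub_cosCentralAngle_same_colatitude]; positivity
  refine (hasDerivAt_log_chordSq R hc hR hne).congr_deriv ?_
  rw [one_sub_cosCentralAngle_same_colatitude]
  field_simp
  ring

theorem hasDerivAt_sphereHam_update_azimuth {n : ℕ} {R θ : ℝ} (Γ : ℝ) (hR : R ≠ 0)
    (hθ : sin θ ≠ 0) (φ : Fin n → ℝ) (i : Fin n) (hφ : ∀ k ≠ i, cos (φ i - φ k) ≠ 1) :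
    HasDerivAt (fun u => sphereHam n R Γ (fun _ => θ) (Function.update φ i u))
      (-(Γ * Γ / (4 * π)) * ∑ k ∈ univ.erase i, sin (φ i - φ k) / (1 - cos (φ i - φ k)))
      (φ i) := by
  simp only [sphereHam_eq]
  refine HasDerivAt.const_mul _ (hasDerivAt_sum_filter_lt_update
    (fun _ _ u v => logChordSq R θ u θ v) (fun _ _ _ _ => logChordSq_comm ..) φ i _ ?_)
  exact fun k hk => hasDerivAt_logChordSq_azimuth hR hθ (hφ k hk)

theorem hasDerivAt_sphereHam_update_colatitude {n : ℕ} {R θ : ℝ} (Γ : ℝ) (hR : R ≠ 0)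
    (hθ : sin θ ≠ 0) (φ : Fin n → ℝ) (i : Fin n) (hφ : ∀ k ≠ i, cos (φ i - φ k) ≠ 1) :
    HasDerivAt (fun u => sphereHam n R Γ (Function.update (fun _ => θ) i u) φ)
      (-(Γ * Γ / (4 * π)) * (((n : ℝ) - 1) * (cos θ / sin θ))) θ := by
  have hcard : ((univ.erase i).card : ℝ) = n - 1 := by
    rw [card_erase_of_mem (mem_univ i), card_univ, Fintype.card_fin,
      Nat.cast_sub (Nat.one_le_of_lt i.pos), Nat.cast_one]
  simp only [sphereHam_eq]
  rw [← hcard, ← nsmul_eq_mul, ← sum_const]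
  refine HasDerivAt.const_mul _ (hasDerivAt_sum_filter_lt_update
    (fun a b u v => logChordSq R u (φ a) v (φ b)) (fun _ _ _ _ => logChordSq_comm ..)
    (fun _ => θ) i _ ?_)
  exact fun k hk => hasDerivAt_logChordSq_colatitude hR hθ (hφ k hk)

theorem Fin.intCast_val_sub_modEq {n : ℕ} (a b : Fin n) :
    (((a - b : Fin n) : ℕ) : ℤ) ≡ (a : ℤ) - b [ZMOD n] := by
  rw [Fin.val_sub, Int.natCast_mod, Nat.cast_add, Nat.cast_sub b.isLt.le]
  refine (Int.mod_modEq _ _).trans ?_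
  simp [Int.ModEq, sub_add_eq_add_sub, add_sub_assoc]

theorem Function.Periodic.apply_mul_div_eq_of_modEq {f : ℝ → ℝ} {T : ℝ}
    (hf : Function.Periodic f T) {n : ℕ} {a b : ℤ} (hab : a ≡ b [ZMOD n]) :
    f (T * a / n) = f (T * b / n) := by
  rcases eq_or_ne n 0 with rfl | hn
  · simp
  obtain ⟨c, hc⟩ := Int.modEq_iff_dvd.mp hab
  have hb : T * (b : ℝ) / n = T * a / n + c * T := by
    have : (b : ℝ) = a + n * c := by exact_mod_cast (by linarith : b = a + n * c)
    rw [this]; field_simp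
  rw [hb, hf.int_mul c]

theorem sum_fin_apply_mul_sub_div_eq_zero {f : ℝ → ℝ} {T : ℝ} (hodd : ∀ x, f (-x) = -f x)
    (hf : Function.Periodic f T) {n : ℕ} (i : Fin n) :
    ∑ k : Fin n, f (T * ((i : ℝ) - k) / n) = 0 := by
  have : NeZero n := NeZero.of_pos i.pos
  have hreflect : ∀ k : Fin n,
      f (T * ((i : ℝ) - k) / n) = -f (T * ((i : ℝ) - (i + i - k : Fin n)) / n) := by
    intro k
    have hmod : (((i + i - k : Fin n) : ℕ) : ℤ) ≡ i + i - k [ZMOD n] :=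
      (Fin.intCast_val_sub_modEq _ _).trans <| by
        rw [Fin.val_add]; push_cast; exact (Int.mod_modEq _ _).sub_right _
    have hper := hf.apply_mul_div_eq_of_modEq (hmod.sub_left (i : ℤ))
    push_cast at hper
    rw [hper, show (i : ℝ) - (i + i - k) = -(i - k) by ring, mul_neg, neg_div, hodd, neg_neg]
  have hsum := Fintype.sum_equiv (Equiv.subLeft (i + i)) _
    (fun j => -f (T * ((i : ℝ) - j) / n)) hreflect
  rw [sum_neg_distrib] at hsum
  linarith

theorem cos_two_pi_mul_sub_div_ne_one {n : ℕ} {a b : Fin n} (hab : a ≠ b) :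
    cos (2 * π * ((a : ℝ) - b) / n) ≠ 1 := by
  have hn : (0 : ℝ) < n := by exact_mod_cast a.pos
  have ha : (a : ℝ) < n := by exact_mod_cast a.isLt
  have hb : (b : ℝ) < n := by exact_mod_cast b.isLt
  have hlo : -1 < ((a : ℝ) - b) / n := by
    rw [lt_div_iff₀ hn]; linarith [b.val.cast_nonneg (α := ℝ)]
  have hhi : ((a : ℝ) - b) / n < 1 := by
    rw [div_lt_one hn]; linarith [a.val.cast_nonneg (α := ℝ)]
  rw [mul_div_assoc]
  intro h
  have h0 := (cos_eq_one_iff_of_lt_of_lt (by nlinarith [pi_pos]) (by nlinarith [pi_pos])).mp h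
  have hq : ((a : ℝ) - b) / n = 0 := by simpa [pi_ne_zero] using h0
  rw [div_eq_zero_iff, sub_eq_zero] at hq
  exact hab (Fin.ext (by exact_mod_cast hq.resolve_right hn.ne'))

theorem sum_erase_sin_div_one_sub_cos_regular_polygon {n : ℕ} (i : Fin n) :
    ∑ k ∈ univ.erase i, sin (2 * π * ((i : ℝ) - k) / n) / (1 - cos (2 * π * ((i : ℝ) - k) / n))
      = 0 := by
  rw [sum_erase univ (by simp)]
  refine sum_fin_apply_mul_sub_div_eq_zero (f := fun x => sin x / (1 - cos x)) (fun x => ?_) ?_ i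
  · simp [neg_div]
  · intro x; simp

/-- The bracket `{φᵢ, cos θ_k} = δ_{ik}/(R²Γ)` turns the equations of motion into
`θ̇ᵢ = (R²Γ sin θᵢ)⁻¹ ∂H/∂φᵢ` and `φ̇ᵢ = -(R²Γ sin θᵢ)⁻¹ ∂H/∂θᵢ`. -/
theorem thomson_ring_on_sphere_general (n : ℕ) (R Γ θ₀ : ℝ)
    (hR : 0 < R) (hθ : θ₀ ∈ Set.Ioo 0 π)
    (ω : ℝ)
    (hω : ω = Γ * ((n : ℝ) - 1) * (Real.cos θ₀ / Real.sin θ₀) /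
      (4 * π * R ^ 2 * Real.sin θ₀))
    (Θ : ℝ → Fin n → ℝ) (Φ : ℝ → Fin n → ℝ)
    (hΘ : ∀ t i, Θ t i = θ₀)
    (hΦ : ∀ t i, Φ t i = 2 * π * (i : ℝ) / n + ω * t) :
    ∀ i : Fin n, ∀ t : ℝ,
      HasDerivAt (fun s => Θ s i)
        ((1 / (R ^ 2 * Γ * Real.sin θ₀)) *
          deriv (fun u => sphereHam n R Γ (Θ t) (Function.update (Φ t) i u)) (Φ t i)) t ∧
      HasDerivAt (fun s => Φ s i)
        (-(1 / (R ^ 2 * Γ * Real.sin θ₀)) *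
          deriv (fun u => sphereHam n R Γ (Function.update (Θ t) i u) (Φ t)) (Θ t i)) t := by
  intro i t
  have hsin : sin θ₀ ≠ 0 := (sin_pos_of_pos_of_lt_pi hθ.1 hθ.2).ne'
  have hΘt : Θ t = fun _ => θ₀ := funext (hΘ t)
  have hgap : ∀ k, Φ t i - Φ t k = 2 * π * ((i : ℝ) - k) / n := fun k => by
    rw [hΦ, hΦ]; ring
  have hsep : ∀ k ≠ i, cos (Φ t i - Φ t k) ≠ 1 := fun k hk => by
    rw [hgap]; exact cos_two_pi_mul_sub_div_ne_one hk.symm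
  constructor
  · simp only [hΘt, hΘ, (hasDerivAt_sphereHam_update_azimuth Γ hR.ne' hsin (Φ t) i hsep).deriv,
      hgap, sum_erase_sin_div_one_sub_cos_regular_polygon, mul_zero]
    exact hasDerivAt_const t θ₀
  · simp only [hΘt, (hasDerivAt_sphereHam_update_colatitude Γ hR.ne' hsin (Φ t) i hsep).deriv]
    have hrate : -(1 / (R ^ 2 * Γ * sin θ₀)) *
        (-(Γ * Γ / (4 * π)) * (((n : ℝ) - 1) * (cos θ₀ / sin θ₀))) = ω := by
      rcases eq_or_ne Γ 0 with rfl | hΓ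
      · simp [hω] -- both sides vanish, since `1 / 0 = 0`
      · rw [hω]; field_simp
    rw [hrate, funext (hΦ · i)]
    simpa using ((hasDerivAt_id t).const_mul ω).const_add (2 * π * (i : ℝ) / n)

/-- The Thomson ring on the sphere: `n` identical vortices of strength `Γ` at
colatitude `θ₀` at the vertices of a regular `n`-gon, rotating rigidly with
angular velocity `ω = Γ(n-1) cot θ₀ / (4πR² sin θ₀)`, solve the spherical
vortex equations `θ̇ᵢ = {θᵢ, H}`, `φ̇ᵢ = {φᵢ, H}` induced by the bracket
`{φᵢ, cos θ_k} = δ_{ik}/(R²Γ)`, namely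
`θ̇ᵢ = (R²Γ sin θᵢ)⁻¹ ∂H/∂φᵢ` and `φ̇ᵢ = -(R²Γ sin θᵢ)⁻¹ ∂H/∂θᵢ`. -/
theorem thomson_ring_on_sphere (n : ℕ) (R Γ θ₀ : ℝ)
    (hR : 0 < R) (hΓ : Γ ≠ 0) (hθ : θ₀ ∈ Set.Ioo 0 π)
    (ω : ℝ)
    (hω : ω = Γ * ((n : ℝ) - 1) * (Real.cos θ₀ / Real.sin θ₀) /
      (4 * π * R ^ 2 * Real.sin θ₀))
    (Θ : ℝ → Fin n → ℝ) (Φ : ℝ → Fin n → ℝ)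
    (hΘ : ∀ t i, Θ t i = θ₀)
    (hΦ : ∀ t i, Φ t i = 2 * π * (i : ℝ) / n + ω * t) :
    ∀ i : Fin n, ∀ t : ℝ,
      HasDerivAt (fun s => Θ s i)
        ((1 / (R ^ 2 * Γ * Real.sin θ₀)) *
          deriv (fun u => sphereHam n R Γ (Θ t) (Function.update (Φ t) i u)) (Φ t i)) t ∧
      HasDerivAt (fun s => Φ s i)
        (-(1 / (R ^ 2 * Γ * Real.sin θ₀)) *
          deriv (fun u => sphereHam n R Γ (Function.update (Θ t) i u) (Φ t)) (Θ t i)) t :=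
  thomson_ring_on_sphere_general n R Γ θ₀ hR hθ ω hω Θ Φ hΘ hΦ
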